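/- Let x, y ∈ ℝ^d, 0 < m ≤ c ≤ M, and let A be symmetric with m·I ⪯ A ⪯ M·I. Then m(‖x‖² + ‖y‖²) ≤ xᵀAx + c‖x - y‖² ≤ M(‖x‖² + ‖y‖²). -/

import Mathlib

/-!
Since `y = x - (x - y)`, Young's inequality with weight `s = m / c` gives
`‖y‖² ≤ (1 + m/c) ‖x‖² + (1 + c/m) ‖x - y‖²`. Multiplied by `mc/(m + 2c)`, this bounds
`mc/(m + 2c) · (‖x‖² + ‖y‖²)` by `m ‖x‖² + c (m + c)/(m + 2c) ‖x - y‖² ≤ m ‖x‖² + c ‖x - y‖²`,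
and `m ‖x‖² ≤ xᵀAx` because `A - m I` is positive semidefinite.
-/

open Matrix

theorem norm_sub_sq_le_young {E : Type*} [SeminormedAddCommGroup E] (x z : E) {s : ℝ}
    (hs : 0 < s) : ‖x - z‖ ^ 2 ≤ (1 + s) * ‖x‖ ^ 2 + (1 + 1 / s) * ‖z‖ ^ 2 := by
  have hyoung : (‖x‖ + ‖z‖) ^ 2 ≤ (1 + s) * ‖x‖ ^ 2 + (1 + 1 / s) * ‖z‖ ^ 2 := by
    have hgap : (1 + s) * ‖x‖ ^ 2 + (1 + 1 / s) * ‖z‖ ^ 2 - (‖x‖ + ‖z‖) ^ 2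
        = (s * ‖x‖ - ‖z‖) ^ 2 / s := by
      field_simp
      ring
    linarith [div_nonneg (sq_nonneg (s * ‖x‖ - ‖z‖)) hs.le]
  calc ‖x - z‖ ^ 2 ≤ (‖x‖ + ‖z‖) ^ 2 := by gcongr; exact norm_sub_le x z
    _ ≤ _ := hyoung

theorem mul_div_mul_norm_sq_add_norm_sq_le {E : Type*} [SeminormedAddCommGroup E] (x y : E)
    {m c : ℝ} (hm : 0 < m) (hc : 0 < c) :
    m * c / (m + 2 * c) * (‖x‖ ^ 2 + ‖y‖ ^ 2) ≤ m * ‖x‖ ^ 2 + c * ‖x - y‖ ^ 2 := by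
  have hy : ‖y‖ ^ 2 ≤ (1 + m / c) * ‖x‖ ^ 2 + (1 + c / m) * ‖x - y‖ ^ 2 := by
    simpa [one_div_div] using norm_sub_sq_le_young x (x - y) (div_pos hm hc)
  have hden : 0 < m + 2 * c := by positivity
  calc m * c / (m + 2 * c) * (‖x‖ ^ 2 + ‖y‖ ^ 2)
      ≤ m * c / (m + 2 * c) * ((2 + m / c) * ‖x‖ ^ 2 + (1 + c / m) * ‖x - y‖ ^ 2) := by
        gcongr ?_ * ?_
        linarith
    _ = m * ‖x‖ ^ 2 + c * (m + c) / (m + 2 * c) * ‖x - y‖ ^ 2 := by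
        field_simp; ring
    _ ≤ m * ‖x‖ ^ 2 + c * ‖x - y‖ ^ 2 := by
        gcongr
        rw [div_le_iff₀ hden]
        nlinarith

theorem dotProduct_self_eq_norm_toLp_sq {ι : Type*} [Fintype ι] (x : ι → ℝ) :
    x ⬝ᵥ x = ‖WithLp.toLp 2 x‖ ^ 2 := by
  rw [← real_inner_self_eq_norm_sq, EuclideanSpace.inner_toLp_toLp, star_trivial]

theorem Matrix.PosSemidef.mul_dotProduct_self_le {ι : Type*} [Fintype ι] [DecidableEq ι]
    {A : Matrix ι ι ℝ} {m : ℝ} (h : (A - m • (1 : Matrix ι ι ℝ)).PosSemidef) (x : ι → ℝ) :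
    m * (x ⬝ᵥ x) ≤ x ⬝ᵥ (A *ᵥ x) := by
  have hnonneg := h.dotProduct_mulVec_nonneg x
  simp only [sub_mulVec, smul_mulVec, one_mulVec, dotProduct_sub, dotProduct_smul, star_trivial,
    smul_eq_mul] at hnonneg
  linarith

theorem stmt_16_general (d : ℕ) (m c : ℝ) (hm : 0 < m) (hmc : m ≤ c)
    (A : Matrix (Fin d) (Fin d) ℝ)
    (hlow : (A - m • (1 : Matrix (Fin d) (Fin d) ℝ)).PosSemidef)
    (x y : Fin d → ℝ) :
    m * c / (m + 2 * c) * (x ⬝ᵥ x + y ⬝ᵥ y)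
      ≤ x ⬝ᵥ (A *ᵥ x) + c * ((x - y) ⬝ᵥ (x - y)) := by
  have hnorm := mul_div_mul_norm_sq_add_norm_sq_le (WithLp.toLp 2 x) (WithLp.toLp 2 y) hm
    (hm.trans_le hmc)
  rw [← WithLp.toLp_sub] at hnorm
  simp only [← dotProduct_self_eq_norm_toLp_sq] at hnorm
  linarith [hlow.mul_dotProduct_self_le x]

/-- for `m·I ⪯ A ⪯ M·I` (A symmetric), `0 < m ≤ c ≤ M`, and all
x, y ∈ ℝ^d: `xᵀAx + c‖x - y‖² ≥ (mc/(m + 2c))·(‖x‖² + ‖y‖²)`. -/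
theorem stmt_16 (d : ℕ) (m M c : ℝ) (hm : 0 < m) (hmc : m ≤ c) (hcM : c ≤ M)
    (A : Matrix (Fin d) (Fin d) ℝ) (hA : A.IsSymm)
    (hlow : (A - m • (1 : Matrix (Fin d) (Fin d) ℝ)).PosSemidef)
    (hup : ((M • (1 : Matrix (Fin d) (Fin d) ℝ)) - A).PosSemidef)
    (x y : Fin d → ℝ) :
    m * c / (m + 2 * c) * (x ⬝ᵥ x + y ⬝ᵥ y)
      ≤ x ⬝ᵥ (A *ᵥ x) + c * ((x - y) ⬝ᵥ (x - y)) :=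
  stmt_16_general d m c hm hmc A hlow x y
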